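/- In H one has s_0^p − s_0 = t^{−1}, and s_n^p − s_n = s_{n−1} for every integer n ≥ 1; that is, the elements s_n form an infinite tower of Artin–Schreier roots above t^{−1}. -/

import Mathlib

/-!
Common setup: `p` a prime, `F` an algebraic closure of `𝔽_p`, `H = F((t^ℚ))` the Hahn series
field with its canonical additive valuation `v` (minimum of the support), the Newton–Puiseux
subfield `K ⊆ H`, the elements `s_n`, the series `s = ∑ tⁿ·s_n`, the truncations `s_{n,i}`,
the rationals `δ(n,i) = n - 1/p^(i+1)`, and the depth-zero valuations `ω_{a,δ}`.
-/

open Polynomial HahnSeries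

variable (p : ℕ) [Fact p.Prime]

/-- `F`, an algebraic closure of `𝔽_p`. -/
abbrev Fbar : Type := AlgebraicClosure (ZMod p)

/-- The Hahn series field `H = F((t^ℚ))`. -/
abbrev H : Type := HahnSeries ℚ (Fbar p)

/-- The additive valuation `v(f) = min (supp f)`, with `v 0 = ∞`. -/
noncomputable def v (f : H p) : WithTop ℚ := f.orderTop

/-- The exponent `-1/p^(j+1)`. -/
def expo (j : ℕ) : ℚ := -((p : ℚ) ^ (j + 1))⁻¹

lemma one_lt_p : (1 : ℚ) < p := by
  exact_mod_cast (Fact.out : p.Prime).one_lt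

lemma expo_mono : Monotone (expo p) := by
  intro j k hjk
  have hp : (1 : ℚ) < p := one_lt_p p
  have h1 : (0 : ℚ) < (p : ℚ) ^ (j + 1) := pow_pos (lt_trans one_pos hp) _
  have h2 : (p : ℚ) ^ (j + 1) ≤ (p : ℚ) ^ (k + 1) :=
    pow_le_pow_right₀ (le_of_lt hp) (by omega)
  have := inv_anti₀ h1 h2
  simp only [expo, neg_le_neg_iff]
  linarith

lemma isPWO_univ_nat : (Set.univ : Set ℕ).IsPWO :=
  (Set.isWF_univ_iff.2 ⟨wellFounded_lt⟩).isPWO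

-- `s_n = ∑_{j ≥ n} C(j,n)·t^(-1/p^(j+1))`, where `C(j,n)` is `j.choose n` reduced mod `p`.
open Classical in
noncomputable def sn (n : ℕ) : H p where
  coeff q := if h : ∃ j : ℕ, n ≤ j ∧ q = expo p j then (Nat.choose h.choose n : Fbar p) else 0
  isPWO_support' := by
    apply ((isPWO_univ_nat.image_of_monotone (expo_mono p)).mono)
    intro q hq
    simp only [Function.mem_support] at hq
    have h : ∃ j : ℕ, n ≤ j ∧ q = expo p j := by
      by_contra h
      rw [dif_neg h] at hq
      exact hq rfl
    obtain ⟨j, _, rfl⟩ := h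
    exact ⟨j, Set.mem_univ j, rfl⟩

-- `s = ∑_{n ≥ 0} tⁿ·s_n`, i.e. the series with coefficient `C(j,n)` at `n - 1/p^(j+1)`.
open Classical in
noncomputable def sH : H p where
  coeff q := if h : ∃ nj : ℕ × ℕ, nj.1 ≤ nj.2 ∧ q = (nj.1 : ℚ) + expo p nj.2 then
      (Nat.choose h.choose.2 h.choose.1 : Fbar p) else 0
  isPWO_support' := by
    have hmono : Monotone (fun nj : ℕ × ℕ => (nj.1 : ℚ) + expo p nj.2) := by
      intro a b hab
      exact add_le_add (by exact_mod_cast hab.1) (expo_mono p hab.2)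
    apply ((isPWO_univ_nat.prod isPWO_univ_nat).image_of_monotone hmono).mono
    intro q hq
    simp only [Function.mem_support] at hq
    have h : ∃ nj : ℕ × ℕ, nj.1 ≤ nj.2 ∧ q = (nj.1 : ℚ) + expo p nj.2 := by
      by_contra h
      rw [dif_neg h] at hq
      exact hq rfl
    obtain ⟨nj, _, rfl⟩ := h
    exact ⟨nj, by simp [Set.mem_prod], rfl⟩

/-- The additive map `ℤ →+ ℚ`, `k ↦ k/N`. -/
def embQ (N : ℕ) : ℤ →+ ℚ where
  toFun k := (k : ℚ) / (N : ℚ)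
  map_zero' := by simp
  map_add' := by intros; push_cast; ring

lemma embQ_inj {N : ℕ} (hN : 0 < N) : Function.Injective (embQ N) := by
  intro a b hab
  have hN' : (0 : ℚ) < N := by exact_mod_cast hN
  simpa [embQ, div_eq_div_iff hN'.ne' hN'.ne', hN'.ne'] using hab

lemma embQ_mono {N : ℕ} (hN : 0 < N) : ∀ g g' : ℤ, embQ N g ≤ embQ N g' ↔ g ≤ g' := by
  intro g g'
  have hN' : (0 : ℚ) < N := by exact_mod_cast hN
  simp [embQ, div_le_div_iff_of_pos_right hN', Int.cast_le]

lemma embQ_strictMono {N : ℕ} (hN : 0 < N) : StrictMono (embQ N) := by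
  have := embQ_mono hN
  exact strictMono_of_le_iff_le fun a b => (this a b).symm

/-- Laurent series (Hahn series over `ℤ`) mapped into `H p` via `k ↦ k/N`. -/
noncomputable def laurentInc (N : ℕ) (hN : 0 < N) : HahnSeries ℤ (Fbar p) →+* H p :=
  HahnSeries.embDomainRingHom (embQ N) (embQ_inj hN) (embQ_mono hN)

lemma mem_range_laurentInc_iff {N : ℕ} (hN : 0 < N) (f : H p) :
    (∃ g, laurentInc p N hN g = f) ↔ ∀ q ∈ f.support, ∃ k : ℤ, q = (k : ℚ) / N := by
  constructor
  · rintro ⟨g, rfl⟩ q hq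
    obtain ⟨k, -, rfl⟩ := HahnSeries.support_embDomain_subset hq
    exact ⟨k, rfl⟩
  · intro hf
    classical
    have hpwo : (Function.support fun k : ℤ => f.coeff (embQ N k)).IsPWO := by
      apply Set.IsWF.isPWO
      rw [Set.isWF_iff_no_descending_seq]
      intro φ hφ hmem
      apply Set.isWF_iff_no_descending_seq.mp f.isWF_support (fun n => embQ N (φ n))
        ((embQ_strictMono hN).comp_strictAnti hφ)
      intro n
      exact hmem n
    refine ⟨⟨fun k => f.coeff (embQ N k), hpwo⟩, ?_⟩
    apply HahnSeries.ext
    funext q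
    by_cases hq : q ∈ Set.range (embQ N)
    · obtain ⟨k, rfl⟩ := hq
      exact HahnSeries.embDomain_mk_coeff (embQ_inj hN) (embQ_mono hN)
    · rw [show (laurentInc p N hN ⟨fun k => f.coeff (embQ N k), hpwo⟩).coeff q = 0 from
        HahnSeries.embDomain_notin_range hq]
      by_contra hne
      obtain ⟨k, hk⟩ := hf q (by simpa [HahnSeries.mem_support] using Ne.symm hne)
      exact hq ⟨k, hk.symm⟩

/-- The Newton–Puiseux field `K`: Hahn series whose support lies in `(1/N)·ℤ` for some `N > 0`. -/
noncomputable def KNP : Subfield (H p) where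
  carrier := {f : H p | ∃ N : ℕ, 0 < N ∧ ∀ q ∈ f.support, ∃ k : ℤ, q = (k : ℚ) / N}
  zero_mem' := ⟨1, one_pos, by simp⟩
  one_mem' := by
    refine ⟨1, one_pos, fun q hq => ?_⟩
    rw [HahnSeries.support_one] at hq
    exact ⟨0, by simp [Set.mem_singleton_iff.mp hq]⟩
  add_mem' := by
    rintro x y ⟨N, hN, hx⟩ ⟨M, hM, hy⟩
    refine ⟨N * M, Nat.mul_pos hN hM, fun q hq => ?_⟩
    rcases HahnSeries.support_add_subset x y hq with h | h
    · obtain ⟨k, rfl⟩ := hx q h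
      refine ⟨k * M, ?_⟩
      have hM' : (M : ℚ) ≠ 0 := by exact_mod_cast hM.ne'
      have hN' : (N : ℚ) ≠ 0 := by exact_mod_cast hN.ne'
      push_cast
      field_simp
    · obtain ⟨k, rfl⟩ := hy q h
      refine ⟨k * N, ?_⟩
      have hM' : (M : ℚ) ≠ 0 := by exact_mod_cast hM.ne'
      have hN' : (N : ℚ) ≠ 0 := by exact_mod_cast hN.ne'
      push_cast
      field_simp
  neg_mem' := by
    rintro x ⟨N, hN, hx⟩
    exact ⟨N, hN, fun q hq => hx q (by rwa [HahnSeries.support_neg] at hq)⟩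
  mul_mem' := by
    rintro x y ⟨N, hN, hx⟩ ⟨M, hM, hy⟩
    refine ⟨N * M, Nat.mul_pos hN hM, fun q hq => ?_⟩
    obtain ⟨q₁, hq₁, q₂, hq₂, rfl⟩ := HahnSeries.support_mul_subset hq
    obtain ⟨k₁, rfl⟩ := hx q₁ hq₁
    obtain ⟨k₂, rfl⟩ := hy q₂ hq₂
    refine ⟨k₁ * M + k₂ * N, ?_⟩
    have hM' : (M : ℚ) ≠ 0 := by exact_mod_cast hM.ne'
    have hN' : (N : ℚ) ≠ 0 := by exact_mod_cast hN.ne'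
    push_cast
    field_simp
  inv_mem' := by
    rintro x ⟨N, hN, hx⟩
    obtain ⟨g, rfl⟩ := (mem_range_laurentInc_iff p hN x).mpr hx
    rw [← map_inv₀]
    exact ⟨N, hN, ((mem_range_laurentInc_iff p hN _).mp ⟨g⁻¹, rfl⟩)⟩

/-- The truncation `s_{n,i} = ∑_{m<n} tᵐ·s_m + tⁿ·∑_{n ≤ j < i} C(j,n)·t^(-1/p^(j+1))`. -/
noncomputable def strunc (n i : ℕ) : H p :=
  (∑ m ∈ Finset.range n, HahnSeries.single (m : ℚ) 1 * sn p m)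
  + HahnSeries.single (n : ℚ) 1 *
      (∑ j ∈ Finset.Ico n i, HahnSeries.single (expo p j) ((Nat.choose j n : Fbar p)))

/-- `δ(n,i) = n - 1/p^(i+1)`. -/
def dlt (n i : ℕ) : ℚ := (n : ℚ) - ((p : ℚ) ^ (i + 1))⁻¹

/-- The depth-zero valuation `ω_{a,δ}(f) = min_ℓ (v(a_ℓ) + ℓ·δ)`, where
`f = ∑_ℓ a_ℓ·(x-a)^ℓ` is the Taylor expansion of `f` at `a`. -/
noncomputable def om (a : H p) (δ : ℚ) (f : Polynomial (H p)) : WithTop ℚ :=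
  (Finset.range (f.natDegree + 1)).inf
    fun ℓ => v p ((Polynomial.taylor a f).coeff ℓ) + (((ℓ : ℚ) * δ : ℚ) : WithTop ℚ)

-- The degree `[K(b) : K]` of an element `b ∈ H` over the Newton–Puiseux field `K`.
set_option synthInstance.maxHeartbeats 1000000 in
noncomputable def degK (b : H p) : ℕ :=
  Module.finrank (KNP p) (IntermediateField.adjoin (KNP p) {b})

lemma tinv_mem : HahnSeries.single (-1 : ℚ) (1 : Fbar p) ∈ KNP p := by
  refine ⟨1, one_pos, fun q hq => ?_⟩
  have := HahnSeries.support_single_subset hq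
  exact ⟨-1, by simp [Set.mem_singleton_iff.mp this]⟩

/-- `t^(-1) = single (-1) 1` as an element of `K`. -/
noncomputable def tinv : KNP p := ⟨HahnSeries.single (-1 : ℚ) (1 : Fbar p), tinv_mem p⟩

/-!
The exponents satisfy `p · (-1/p^(j+2)) = -1/p^(j+1)` and `p · (-1/p) = -1`, and in
characteristic `p` the Frobenius acts on a Hahn series coefficientwise,
`(x ^ p).coeff (p • a) = (x.coeff a) ^ p`. Hence `s_n^p` has coefficient `C(j+1, n)` at
`-1/p^(j+1)` and `C(0, n)` at `-1`, and Pascal's rule `C(j+1, n) = C(j, n-1) + C(j, n)` gives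
both identities coefficientwise.
-/

open Set

namespace HahnSeries

theorem ext_of_support_subset {Γ R : Type*} [PartialOrder Γ] [Zero R] {s : Set Γ}
    {f g : R⟦Γ⟧} (hf : f.support ⊆ s) (hg : g.support ⊆ s)
    (h : ∀ a ∈ s, f.coeff a = g.coeff a) : f = g := by
  ext a
  by_cases ha : a ∈ s
  · exact h a ha
  · rw [Function.notMem_support.mp fun h' => ha (hf h'),
      Function.notMem_support.mp fun h' => ha (hg h')]

section Frobenius

variable {Γ R : Type*} [AddCommMonoid Γ] [LinearOrder Γ] [IsOrderedCancelAddMonoid Γ]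

theorem support_pow_subset_Iio [Semiring R] {x : R⟦Γ⟧} {a : Γ} (hx : x.support ⊆ Iio a)
    {n : ℕ} (hn : n ≠ 0) : (x ^ n).support ⊆ Iio (n • a) := by
  induction n with
  | zero => exact absurd rfl hn
  | succ n ih =>
    rcases eq_or_ne n 0 with rfl | hn
    · simpa using hx
    rw [pow_succ, succ_nsmul]
    intro b hb
    obtain ⟨c, hc, d, hd, rfl⟩ := support_mul_subset hb
    exact add_lt_add (ih hn hc) (hx hd)

theorem support_pow_subset_Ioi [Semiring R] {x : R⟦Γ⟧} {a : Γ} (hx : x.support ⊆ Ioi a)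
    {n : ℕ} (hn : n ≠ 0) : (x ^ n).support ⊆ Ioi (n • a) := by
  induction n with
  | zero => exact absurd rfl hn
  | succ n ih =>
    rcases eq_or_ne n 0 with rfl | hn
    · simpa using hx
    rw [pow_succ, succ_nsmul]
    intro b hb
    obtain ⟨c, hc, d, hd, rfl⟩ := support_mul_subset hb
    exact add_lt_add (ih hn hc) (hx hd)

/-- Split `x` into its parts below, at and above `a`: the Frobenius is additive, and the outer
parts contribute to `x ^ p` only below and above `p • a`. -/
theorem coeff_pow_expChar_nsmul [CommRing R] (q : ℕ) [ExpChar R q] (x : R⟦Γ⟧) (a : Γ) :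
    (x ^ q).coeff (q • a) = x.coeff a ^ q := by
  classical
  have : ExpChar R⟦Γ⟧ q := expChar_of_injective_ringHom C_injective q
  have hq : q ≠ 0 := expChar_ne_zero R q
  set lo := truncLT a x
  set hi := x - lo - single a (x.coeff a)
  have hlo : lo.support ⊆ Iio a := fun b hb => by
    by_contra h
    exact hb (by simp [lo, HahnSeries.coeff_truncLT, not_lt.mp h])
  have hhi : hi.support ⊆ Ioi a := fun b hb => by
    by_contra h
    rcases (not_lt.mp h).lt_or_eq with h | rfl
    · exact hb (by simp [hi, lo, HahnSeries.coeff_truncLT, h, h.ne])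
    · exact hb (by simp [hi, lo, HahnSeries.coeff_truncLT])
  have hsplit : x ^ q = lo ^ q + single (q • a) (x.coeff a ^ q) + hi ^ q := by
    rw [← single_pow, ← add_pow_expChar, ← add_pow_expChar]
    simp only [hi, sub_sub, add_sub_cancel]
  rw [hsplit, coeff_add, coeff_add, coeff_single_same,
    Function.notMem_support.mp fun h => lt_irrefl _ (support_pow_subset_Iio hlo hq h),
    Function.notMem_support.mp fun h => lt_irrefl _ (support_pow_subset_Ioi hhi hq h),
    zero_add, add_zero]

end Frobenius

end HahnSeries

theorem p_ne_zero : (p : ℚ) ≠ 0 := (zero_lt_one.trans (one_lt_p p)).ne'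

theorem expo_strictMono : StrictMono (expo p) := fun j k hjk => by
  have hpow : (p : ℚ) ^ (j + 1) < (p : ℚ) ^ (k + 1) :=
    pow_lt_pow_right₀ (one_lt_p p) (by omega)
  simpa [expo] using inv_strictAnti₀ (pow_pos (zero_lt_one.trans (one_lt_p p)) _) hpow

theorem expo_ne_neg_one (j : ℕ) : expo p j ≠ -1 := by
  rw [expo, Ne, neg_inj, inv_eq_one]
  exact (one_lt_pow₀ (one_lt_p p) j.succ_ne_zero).ne'

theorem nsmul_expo_succ (j : ℕ) : p • expo p (j + 1) = expo p j := by
  simp only [expo, nsmul_eq_mul, pow_succ _ (j + 1)]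
  field_simp [p_ne_zero p]

theorem nsmul_expo_zero : p • expo p 0 = -1 := by
  simp only [expo, nsmul_eq_mul, zero_add, pow_one]
  field_simp [p_ne_zero p]

theorem sn_coeff_expo (n j : ℕ) : (sn p n).coeff (expo p j) = (j.choose n : Fbar p) := by
  unfold sn
  dsimp only
  split_ifs with h
  · rw [(expo_strictMono p).injective h.choose_spec.2.symm]
  · rw [Nat.choose_eq_zero_of_lt (not_le.mp fun hj => h ⟨j, hj, rfl⟩), Nat.cast_zero]

theorem support_sn_subset (n : ℕ) : (sn p n).support ⊆ range (expo p) := by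
  intro q hq
  by_contra h
  refine hq ?_
  unfold sn
  dsimp only
  rw [dif_neg]
  rintro ⟨j, -, rfl⟩
  exact h ⟨j, rfl⟩

theorem sn_coeff_neg_one (n : ℕ) : (sn p n).coeff (-1) = 0 :=
  Function.notMem_support.mp fun h =>
    let ⟨j, hj⟩ := support_sn_subset p n h
    expo_ne_neg_one p j hj

theorem support_sn_pow_subset (n : ℕ) :
    (sn p n ^ p).support ⊆ insert (-1) (range (expo p)) := by
  intro q hq
  have hq' : q = p • (q / p) := by rw [nsmul_eq_mul]; field_simp [p_ne_zero p]
  rw [mem_support, hq', coeff_pow_expChar_nsmul] at hq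
  obtain ⟨j, hj⟩ := support_sn_subset p n (ne_zero_pow (Fact.out : p.Prime).ne_zero hq)
  rw [hq', ← hj]
  cases j with
  | zero => exact .inl (nsmul_expo_zero p)
  | succ j => exact .inr ⟨j, (nsmul_expo_succ p j).symm⟩

theorem support_sn_pow_sub_sn_subset (n : ℕ) :
    (sn p n ^ p - sn p n).support ⊆ insert (-1) (range (expo p)) :=
  (support_sub_subset _ _).trans <|
    union_subset (support_sn_pow_subset p n) ((support_sn_subset p n).trans (subset_insert _ _))

theorem sn_pow_sub_sn_coeff_expo (n j : ℕ) :
    (sn p n ^ p - sn p n).coeff (expo p j) = ((j + 1).choose n - j.choose n : Fbar p) := by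
  rw [HahnSeries.coeff_sub, sn_coeff_expo, ← nsmul_expo_succ, coeff_pow_expChar_nsmul,
    sn_coeff_expo, ← frobenius_def, map_natCast]

theorem sn_pow_sub_sn_coeff_neg_one (n : ℕ) :
    (sn p n ^ p - sn p n).coeff (-1) = ((0 : ℕ).choose n : Fbar p) := by
  rw [HahnSeries.coeff_sub, sn_coeff_neg_one, sub_zero, ← nsmul_expo_zero p,
    coeff_pow_expChar_nsmul, sn_coeff_expo, ← frobenius_def, map_natCast]

/-- `s₀^p - s₀ = t⁻¹` and `sₙ^p - sₙ = s_{n-1}` for `n ≥ 1`: the elements `sₙ`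
form an infinite tower of Artin–Schreier roots above `t⁻¹`. -/
theorem artin_schreier_tower :
    sn p 0 ^ p - sn p 0 = HahnSeries.single (-1 : ℚ) (1 : Fbar p) ∧
    ∀ n : ℕ, 1 ≤ n → sn p n ^ p - sn p n = sn p (n - 1) := by
  constructor
  · refine ext_of_support_subset (support_sn_pow_sub_sn_subset p 0)
      (support_single_subset.trans (by simp)) ?_
    rw [forall_mem_insert, forall_mem_range]
    refine ⟨by simp [sn_pow_sub_sn_coeff_neg_one], fun j => ?_⟩
    simp [sn_pow_sub_sn_coeff_expo, expo_ne_neg_one]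
  · rintro (_ | n) hn
    · omega
    refine ext_of_support_subset (support_sn_pow_sub_sn_subset p (n + 1))
      ((support_sn_subset p n).trans (subset_insert _ _)) ?_
    rw [forall_mem_insert, forall_mem_range]
    refine ⟨by simp [sn_pow_sub_sn_coeff_neg_one, sn_coeff_neg_one], fun j => ?_⟩
    simp [sn_pow_sub_sn_coeff_expo, sn_coeff_expo, Nat.choose_succ_succ']
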